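/- Let n ≥ 1, s ∈ ℕ, q ∈ (1, ∞], x₀ ∈ ℝⁿ and r > 0. If a ∈ L^q(ℝⁿ; ℂ) is supported in the closed ball B = B(x₀, r) and satisfies ∫_{ℝⁿ} a(ξ) ξ^α dξ = 0 for every multi-index α with |α| ≤ s, then a is integrable and for every x ∈ ℝⁿ one has |â(x)| ≤ |B|^{1−1/q} ‖a‖_{L^q} · min{1, (2π r |x|)^{s+1}/(s+1)!}, where |B| denotes the Lebesgue measure of B. -/

import Mathlib

open MeasureTheory Real Finset Function
open Complex (I)
open scoped ENNReal FourierTransform NNReal RealInnerProductSpace Nat Complex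

/-!
Hölder's inequality on the ball gives `‖a‖₁ ≤ |B|^(1 - 1/q) ‖a‖_q`, and `‖â‖_∞ ≤ ‖a‖₁` accounts
for the `1` in the minimum. For the other bound write
`e^(-2πi⟨ξ,x⟩) = e^(-2πi⟨x₀,x⟩) e^(iu(ξ))` with `u(ξ) = -2π⟨ξ - x₀, x⟩`. The Taylor polynomial of
degree `s` of `e^(iu)` is a polynomial of degree `≤ s` in `ξ`, so it integrates to zero against `a`.
What remains is controlled by the sharp Taylor remainder `|e^(iu) - Σ_{k ≤ s} (iu)^k/k!| ≤
|u|^(s+1)/(s+1)!`, and `|u(ξ)| ≤ 2πr|x|` on the ball.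
-/

theorem MeasureTheory.eLpNorm_one_le_measure_rpow_mul_eLpNorm {α E : Type*} [MeasurableSpace α]
    [NormedAddCommGroup E] {μ : Measure α} {f : α → E} {t : Set α} {q : ℝ≥0∞} (hq : 1 ≤ q)
    (hf : AEStronglyMeasurable f μ) (hsupp : support f ⊆ t) :
    eLpNorm f 1 μ ≤ μ t ^ (1 - q⁻¹.toReal) * eLpNorm f q μ := by
  have hHolder := eLpNorm_le_eLpNorm_mul_rpow_measure_univ hq (hf.restrict (s := t))
  rwa [Measure.restrict_apply_univ, eLpNorm_restrict_eq_of_support_subset hsupp,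
    eLpNorm_restrict_eq_of_support_subset hsupp, ENNReal.toReal_one, div_one, one_div,
    ← ENNReal.toReal_inv, mul_comm] at hHolder

theorem hasDerivAt_sum_pow_div_factorial (m : ℕ) (z : ℂ) :
    HasDerivAt (fun w : ℂ => ∑ k ∈ range (m + 1), w ^ k / (k ! : ℂ))
      (∑ k ∈ range m, z ^ k / (k ! : ℂ)) z := by
  induction m with
  | zero => simpa using hasDerivAt_const z (1 : ℂ)
  | succ m ih =>
    have hlast : HasDerivAt (fun w : ℂ => w ^ (m + 1) / ((m + 1)! : ℂ)) (z ^ m / (m ! : ℂ)) z := by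
      refine ((hasDerivAt_pow (m + 1) z).div_const _).congr_deriv ?_
      rw [Nat.factorial_succ]
      push_cast
      field_simp
    simp only [sum_range_succ _ (m + 1)]
    exact (ih.fun_add hlast).congr_deriv (sum_range_succ _ m).symm

theorem hasDerivAt_exp_mul_I_sub_taylor (m : ℕ) (t : ℝ) :
    HasDerivAt (fun u : ℝ => cexp (u * I) - ∑ k ∈ range (m + 1), ((u : ℂ) * I) ^ k / (k ! : ℂ))
      (I * (cexp (t * I) - ∑ k ∈ range m, ((t : ℂ) * I) ^ k / (k ! : ℂ))) t := by
  have h := ((Complex.hasDerivAt_exp _).sub (hasDerivAt_sum_pow_div_factorial m _)).comp (t : ℂ)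
    ((hasDerivAt_id (t : ℂ)).mul_const I)
  simpa [mul_comm] using h.comp_ofReal

theorem norm_exp_mul_I_sub_taylor_le_of_nonneg (m : ℕ) {t : ℝ} (ht : 0 ≤ t) :
    ‖cexp (t * I) - ∑ k ∈ range m, ((t : ℂ) * I) ^ k / (k ! : ℂ)‖ ≤ t ^ m / m ! := by
  induction m generalizing t with
  | zero => simp [Complex.norm_exp]
  | succ m ih =>
    have hFTC := intervalIntegral.integral_eq_sub_of_hasDerivAt
      (fun u _ => hasDerivAt_exp_mul_I_sub_taylor m u)
      ((by fun_prop : Continuous fun u : ℝ =>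
        I * (cexp (u * I) - ∑ k ∈ range m, ((u : ℂ) * I) ^ k / (k ! : ℂ))).intervalIntegrable 0 t)
    have h0 : ∑ k ∈ range (m + 1), (0 : ℂ) ^ k / (k ! : ℂ) = 1 := by
      simp [sum_range_succ']
    simp only [Complex.ofReal_zero, zero_mul, Complex.exp_zero, h0, sub_self, sub_zero] at hFTC
    rw [← hFTC]
    calc _ ≤ ∫ u in (0 : ℝ)..t,
            ‖I * (cexp (u * I) - ∑ k ∈ range m, ((u : ℂ) * I) ^ k / (k ! : ℂ))‖ :=
          intervalIntegral.norm_integral_le_integral_norm ht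
      _ ≤ ∫ u in (0 : ℝ)..t, u ^ m / m ! := by
          refine intervalIntegral.integral_mono_on ht
            ((by fun_prop : Continuous _).intervalIntegrable _ _)
            ((by fun_prop : Continuous _).intervalIntegrable _ _) fun u hu => ?_
          rw [norm_mul, Complex.norm_I, one_mul]
          exact ih hu.1
      _ = t ^ (m + 1) / (m + 1)! := by
          rw [intervalIntegral.integral_div, integral_pow, Nat.factorial_succ]
          push_cast
          field_simp
          ring

theorem norm_exp_mul_I_sub_taylor_le (m : ℕ) (t : ℝ) :
    ‖cexp (t * I) - ∑ k ∈ range m, ((t : ℂ) * I) ^ k / (k ! : ℂ)‖ ≤ |t| ^ m / m ! := by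
  rcases le_total 0 t with ht | ht
  · rw [abs_of_nonneg ht]
    exact norm_exp_mul_I_sub_taylor_le_of_nonneg m ht
  · have hconj : cexp (t * I) - ∑ k ∈ range m, ((t : ℂ) * I) ^ k / (k ! : ℂ) =
        starRingEnd ℂ
          (cexp ((-t : ℝ) * I) - ∑ k ∈ range m, (((-t : ℝ) : ℂ) * I) ^ k / (k ! : ℂ)) := by
      simp [← Complex.exp_conj, Complex.conj_ofReal]
    rw [hconj, RCLike.norm_conj, abs_of_nonpos ht]
    exact norm_exp_mul_I_sub_taylor_le_of_nonneg m (neg_nonneg.2 ht)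

theorem MeasureTheory.Integrable.continuous_mul_of_support_subset_isCompact {X R : Type*}
    [TopologicalSpace X] [T2Space X] [MeasurableSpace X] [OpensMeasurableSpace X]
    [NormedRing R] [SecondCountableTopologyEither X R] {μ : Measure X} {f g : X → R} {K : Set X}
    (hf : Integrable f μ) (hg : Continuous g) (hK : IsCompact K) (hsupp : support f ⊆ K) :
    Integrable (fun x => g x * f x) μ :=
  (integrableOn_iff_integrable_of_support_subset ((support_mul_subset_right g f).trans hsupp)).1
    (hf.integrableOn.continuousOn_mul hg.continuousOn hK)

section Moments

variable {ι : Type*} [Fintype ι] {μ : Measure (EuclideanSpace ℝ ι)} {a : EuclideanSpace ℝ ι → ℂ}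
  {s : ℕ}

def HasVanishingMoments (μ : Measure (EuclideanSpace ℝ ι)) (a : EuclideanSpace ℝ ι → ℂ) (s : ℕ) :
    Prop :=
  ∀ α : ι → ℕ, ∑ i, α i ≤ s → ∫ ξ, ((∏ i, ξ i ^ α i : ℝ) : ℂ) * a ξ ∂μ = 0

theorem integral_eval_mul_eq_zero_of_totalDegree_le
    (hint : ∀ α : ι → ℕ, Integrable (fun ξ => ((∏ i, ξ i ^ α i : ℝ) : ℂ) * a ξ) μ)
    (hmom : HasVanishingMoments μ a s)
    {p : MvPolynomial ι ℂ} (hp : p.totalDegree ≤ s) :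
    ∫ ξ, MvPolynomial.eval (fun i => (ξ i : ℂ)) p * a ξ ∂μ = 0 := by
  have hexpand : ∀ ξ : EuclideanSpace ℝ ι, MvPolynomial.eval (fun i => (ξ i : ℂ)) p * a ξ =
      ∑ d ∈ p.support, p.coeff d * (((∏ i, ξ i ^ d i : ℝ) : ℂ) * a ξ) := by
    intro ξ
    rw [MvPolynomial.eval_eq', sum_mul]
    refine sum_congr rfl fun d _ => ?_
    push_cast
    ring
  simp_rw [hexpand]
  rw [integral_finsetSum _ fun (d : ι →₀ ℕ) _ => (hint d).const_mul (p.coeff d)]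
  refine sum_eq_zero fun d hd => ?_
  rw [integral_const_mul, hmom d ?_, mul_zero]
  have := MvPolynomial.le_totalDegree hd
  rw [Finsupp.sum_fintype _ _ fun _ => rfl] at this
  omega

theorem integral_inner_sub_pow_mul_eq_zero
    (hint : ∀ α : ι → ℕ, Integrable (fun ξ => ((∏ i, ξ i ^ α i : ℝ) : ℂ) * a ξ) μ)
    (hmom : HasVanishingMoments μ a s)
    (x₀ x : EuclideanSpace ℝ ι) {k : ℕ} (hk : k ≤ s) :
    ∫ ξ, ((⟪ξ - x₀, x⟫ : ℝ) : ℂ) ^ k * a ξ ∂μ = 0 := by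
  open MvPolynomial in
  set L : MvPolynomial ι ℂ := ∑ i, C (x i : ℂ) * (X i - C (x₀ i : ℂ))
  have hL : L.totalDegree ≤ 1 := by
    refine (totalDegree_finsetSum _ _).trans (Finset.sup_le fun i _ => ?_)
    refine (totalDegree_mul _ _).trans ?_
    rw [totalDegree_C, zero_add]
    refine (totalDegree_sub _ _).trans ?_
    simp [totalDegree_X, totalDegree_C]
  have hdeg : (L ^ k).totalDegree ≤ s :=
    (totalDegree_pow _ _).trans (by nlinarith)
  convert integral_eval_mul_eq_zero_of_totalDegree_le hint hmom hdeg using 3 with ξ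
  simp [L, PiLp.inner_apply, mul_comm]

end Moments

section Fourier

variable {ι : Type*} [Fintype ι] {a : EuclideanSpace ℝ ι → ℂ} {x₀ : EuclideanSpace ℝ ι} {r : ℝ}
  {s : ℕ}

theorem integral_taylor_exp_inner_mul_eq_zero (ha : Integrable a)
    (hsupp : support a ⊆ Metric.closedBall x₀ r)
    (hmom : HasVanishingMoments volume a s)
    (x : EuclideanSpace ℝ ι) :
    ∫ ξ, (∑ k ∈ range (s + 1), (((-(2 * π * ⟪ξ - x₀, x⟫) : ℝ) : ℂ) * I) ^ k / (k ! : ℂ)) * a ξ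
      = 0 := by
  have hint : ∀ g : EuclideanSpace ℝ ι → ℂ, Continuous g → Integrable (fun ξ => g ξ * a ξ) :=
    fun g hg => ha.continuous_mul_of_support_subset_isCompact hg (isCompact_closedBall x₀ r) hsupp
  have hterm : ∀ k ξ, (((-(2 * π * ⟪ξ - x₀, x⟫) : ℝ) : ℂ) * I) ^ k / (k ! : ℂ) * a ξ =
      (-2 * π * I) ^ k / k ! * (((⟪ξ - x₀, x⟫ : ℝ) : ℂ) ^ k * a ξ) := by
    intro k ξ
    push_cast
    ring
  simp_rw [sum_mul, hterm]
  rw [integral_finsetSum _ fun k _ => (hint _ (by fun_prop)).const_mul _]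
  refine sum_eq_zero fun k hk => ?_
  rw [integral_const_mul, integral_inner_sub_pow_mul_eq_zero (fun α => hint _ (by fun_prop)) hmom
    x₀ x (Nat.lt_succ_iff.1 (mem_range.1 hk)), mul_zero]

theorem norm_fourier_le_of_moments_vanish (ha : Integrable a)
    (hsupp : support a ⊆ Metric.closedBall x₀ r)
    (hmom : HasVanishingMoments volume a s)
    (x : EuclideanSpace ℝ ι) :
    ‖𝓕 a x‖ ≤ (2 * π * r * ‖x‖) ^ (s + 1) / (s + 1)! * ∫ ξ, ‖a ξ‖ := by
  set u : EuclideanSpace ℝ ι → ℝ := fun ξ => -(2 * π * ⟪ξ - x₀, x⟫)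
  set T : EuclideanSpace ℝ ι → ℂ := fun ξ => ∑ k ∈ range (s + 1), ((u ξ : ℂ) * I) ^ k / (k ! : ℂ)
  set c : ℂ := cexp ((-(2 * π * ⟪x₀, x⟫) : ℝ) * I)
  have hint : ∀ g : EuclideanSpace ℝ ι → ℂ, Continuous g → Integrable (fun ξ => g ξ * a ξ) :=
    fun g hg => ha.continuous_mul_of_support_subset_isCompact hg (isCompact_closedBall x₀ r) hsupp
  have hkernel : ∀ ξ, cexp ((-2 * π * ⟪ξ, x⟫ : ℝ) * I) = c * cexp (u ξ * I) := by
    intro ξ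
    rw [← Complex.exp_add]
    simp only [u, inner_sub_left]
    push_cast
    ring_nf
  have hF : 𝓕 a x = c * ∫ ξ, (cexp (u ξ * I) - T ξ) * a ξ := by
    simp_rw [sub_mul]
    rw [integral_sub (hint _ (by fun_prop)) (hint _ (by fun_prop)),
      integral_taylor_exp_inner_mul_eq_zero ha hsupp hmom x, sub_zero, ← integral_const_mul,
      Real.fourier_eq']
    simp_rw [hkernel, smul_eq_mul, mul_assoc]
  have hpointwise : ∀ ξ, ‖(cexp (u ξ * I) - T ξ) * a ξ‖ ≤
      (2 * π * r * ‖x‖) ^ (s + 1) / (s + 1)! * ‖a ξ‖ := by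
    intro ξ
    rw [norm_mul]
    by_cases hξ : ξ ∈ Metric.closedBall x₀ r
    · gcongr
      refine (norm_exp_mul_I_sub_taylor_le _ _).trans ?_
      gcongr
      calc |u ξ| = 2 * π * |⟪ξ - x₀, x⟫| := by simp [u, abs_mul, pi_pos.le]
        _ ≤ 2 * π * (r * ‖x‖) := by
          gcongr
          exact (abs_real_inner_le_norm _ _).trans
            (mul_le_mul_of_nonneg_right (mem_closedBall_iff_norm.1 hξ) (norm_nonneg _))
        _ = 2 * π * r * ‖x‖ := by ring
    · simp [notMem_support.1 (mt (@hsupp ξ) hξ)]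
  have hc : ‖c‖ = 1 := by simp [c, Complex.norm_exp]
  rw [hF, norm_mul, hc, one_mul, ← integral_const_mul]
  exact norm_integral_le_of_norm_le (ha.norm.const_mul _) (.of_forall hpointwise)

theorem norm_fourier_le_min_of_moments_vanish (ha : Integrable a)
    (hsupp : support a ⊆ Metric.closedBall x₀ r)
    (hmom : HasVanishingMoments volume a s)
    (x : EuclideanSpace ℝ ι) :
    ‖𝓕 a x‖ ≤ min 1 ((2 * π * r * ‖x‖) ^ (s + 1) / (s + 1)!) * ∫ ξ, ‖a ξ‖ := by
  rw [min_mul_of_nonneg _ _ (integral_nonneg fun _ => norm_nonneg _), one_mul]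
  exact le_min (VectorFourier.norm_fourierIntegral_le_integral_norm _ _ _ _ _)
    (norm_fourier_le_of_moments_vanish ha hsupp hmom x)

end Fourier

theorem fourier_Lq_atom_bound_general {n : ℕ} (s : ℕ) (q : ℝ≥0∞) (hq : 1 < q)
    (x₀ : EuclideanSpace ℝ (Fin n)) (r : ℝ)
    (a : EuclideanSpace ℝ (Fin n) → ℂ) (ha : MemLp a q)
    (hsupp : Function.support a ⊆ Metric.closedBall x₀ r)
    (hmom : ∀ α : Fin n → ℕ, (∑ i, α i) ≤ s →
      ∫ ξ : EuclideanSpace ℝ (Fin n), ((∏ i, (ξ i) ^ (α i) : ℝ) : ℂ) * a ξ = 0) :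
    Integrable a ∧
      ∀ x : EuclideanSpace ℝ (Fin n),
        (‖𝓕 a x‖₊ : ℝ≥0∞) ≤ (volume (Metric.closedBall x₀ r)) ^ (1 - (q⁻¹).toReal) *
          eLpNorm a q volume *
          ENNReal.ofReal (min 1 ((2 * π * r * ‖x‖) ^ (s + 1) / (Nat.factorial (s + 1)))) := by
  have hInt : Integrable a := memLp_one_iff_integrable.1 <|
    ha.mono_exponent_of_measure_support_ne_top (fun ξ hξ => notMem_support.1 (mt (@hsupp ξ) hξ))
      measure_closedBall_lt_top.ne hq.le
  refine ⟨hInt, fun x => ?_⟩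
  have hnorm : 0 ≤ ∫ ξ, ‖a ξ‖ := integral_nonneg fun _ => norm_nonneg _
  calc (‖𝓕 a x‖₊ : ℝ≥0∞) = ENNReal.ofReal ‖𝓕 a x‖ := (ofReal_norm _).symm
    _ ≤ ENNReal.ofReal (min 1 ((2 * π * r * ‖x‖) ^ (s + 1) / (s + 1)!) * ∫ ξ, ‖a ξ‖) :=
        ENNReal.ofReal_le_ofReal (norm_fourier_le_min_of_moments_vanish hInt hsupp hmom x)
    _ = eLpNorm a 1 volume * ENNReal.ofReal (min 1 ((2 * π * r * ‖x‖) ^ (s + 1) / (s + 1)!)) := by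
        rw [ENNReal.ofReal_mul' hnorm, ofReal_integral_norm_eq_lintegral_enorm hInt,
          eLpNorm_one_eq_lintegral_enorm, mul_comm]
    _ ≤ _ := by
        gcongr
        exact eLpNorm_one_le_measure_rpow_mul_eLpNorm hq.le ha.aestronglyMeasurable hsupp

theorem fourier_Lq_atom_bound {n : ℕ} (hn : 1 ≤ n) (s : ℕ) (q : ℝ≥0∞) (hq : 1 < q)
    (x₀ : EuclideanSpace ℝ (Fin n)) (r : ℝ) (hr : 0 < r)
    (a : EuclideanSpace ℝ (Fin n) → ℂ) (ha : MemLp a q)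
    (hsupp : Function.support a ⊆ Metric.closedBall x₀ r)
    (hmom : ∀ α : Fin n → ℕ, (∑ i, α i) ≤ s →
      ∫ ξ : EuclideanSpace ℝ (Fin n), ((∏ i, (ξ i) ^ (α i) : ℝ) : ℂ) * a ξ = 0) :
    Integrable a ∧
      ∀ x : EuclideanSpace ℝ (Fin n),
        (‖𝓕 a x‖₊ : ℝ≥0∞) ≤ (volume (Metric.closedBall x₀ r)) ^ (1 - (q⁻¹).toReal) *
          eLpNorm a q volume *
          ENNReal.ofReal (min 1 ((2 * π * r * ‖x‖) ^ (s + 1) / (Nat.factorial (s + 1)))) :=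
  fourier_Lq_atom_bound_general s q hq x₀ r a ha hsupp hmom
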